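/- arXiv:2103.13839 — 6 statements merged into one kernel-verified Lean document; each statement's English description precedes it below -/
import Mathlib

section
/- For every iteration index i ∈ ℕ, the lower value iteration satisfies V̲_i(uns) ≤ inf_{y∈Y} V(y), and V̲_i(q) ≤ inf_{y∈c(q)} V(y) for every q ∈ Q, where the iteration is defined by V̲_0(p) = R̲(p) and V̲_{i+1}(p) = R̲(p) + γ · ∑_{p'∈Q⊕{uns}} π(p,p')·V̲_i(p') for all p ∈ Q ⊕ {uns}. -/
open MeasureTheory ProbabilityTheory

theorem lower_value_iteration_le
    {Y : Type*} [MeasurableSpace Y]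
    (T : Kernel Y Y) [IsMarkovKernel T]
    (γ : ℝ) (hγ0 : 0 ≤ γ) (hγ1 : γ < 1)
    (Rmax : ℝ) (hRmax : 0 ≤ Rmax)
    (R : Y → ℝ) (hRmeas : Measurable R)
    (hR0 : ∀ y, 0 ≤ R y) (hRb : ∀ y, R y ≤ Rmax)
    (V : Y → ℝ) (hVmeas : Measurable V)
    (hVbdd : ∃ C, ∀ y, V y ≤ C) (hV0 : ∀ y, 0 ≤ V y)
    (hBellman : ∀ y, V y = R y + γ * ∫ y', V y' ∂(T y))
    {Q : Type*} [Fintype Q] [Nonempty Q]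
    (c : Q → Set Y) (hcne : ∀ q, (c q).Nonempty)
    (hcmeas : ∀ q, MeasurableSet (c q))
    (hcdisj : ∀ q q', q ≠ q' → Disjoint (c q) (c q'))
    (X : Set Y) (hX : X = ⋃ q, c q)
    (ystar : Q → Y) (hystar : ∀ q, ystar q ∈ c q)
    (hystarV : ∀ q, V (ystar q) = sInf (V '' c q))
    (π : (Q ⊕ Unit) → (Q ⊕ Unit) → ℝ)
    (hπ1 : ∀ q q', π (Sum.inl q) (Sum.inl q') = ((T (ystar q)) (c q')).toReal)
    (hπ2 : ∀ q, π (Sum.inl q) (Sum.inr ()) = ((T (ystar q)) Xᶜ).toReal)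
    (hπ3 : π (Sum.inr ()) (Sum.inr ()) = 1)
    (hπ4 : ∀ q', π (Sum.inr ()) (Sum.inl q') = 0)
    (Rlow : (Q ⊕ Unit) → ℝ)
    (hRl1 : ∀ q, Rlow (Sum.inl q) = sInf (R '' c q))
    (hRl2 : Rlow (Sum.inr ()) = ⨅ y, R y)
    (Vlow : ℕ → (Q ⊕ Unit) → ℝ)
    (hVl0 : ∀ p, Vlow 0 p = Rlow p)
    (hVlsucc : ∀ i p, Vlow (i + 1) p
      = Rlow p + γ * ∑ p' : Q ⊕ Unit, π p p' * Vlow i p') :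
    ∀ i : ℕ, (Vlow i (Sum.inr ()) ≤ ⨅ y, V y) ∧
      (∀ q, Vlow i (Sum.inl q) ≤ sInf (V '' c q)) := by
  classical
  have hY : Nonempty Y := ⟨(hcne (Classical.arbitrary Q)).choose⟩
  obtain ⟨C, hC⟩ := hVbdd
  have hRbb : BddBelow (Set.range R) := ⟨0, by rintro _ ⟨y, rfl⟩; exact hR0 y⟩
  have hVbb : BddBelow (Set.range V) := ⟨0, by rintro _ ⟨y, rfl⟩; exact hV0 y⟩
  have hRbbc : ∀ q, BddBelow (R '' c q) :=
    fun q => ⟨0, by rintro _ ⟨y, _, rfl⟩; exact hR0 y⟩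
  have hVbbc : ∀ q, BddBelow (V '' c q) :=
    fun q => ⟨0, by rintro _ ⟨y, _, rfl⟩; exact hV0 y⟩
  have hXmeas : MeasurableSet X := hX ▸ MeasurableSet.iUnion hcmeas
  have hInt : ∀ y : Y, Integrable V (T y) := by
    intro y
    refine Integrable.mono' (integrable_const C) hVmeas.aestronglyMeasurable ?_
    exact Filter.Eventually.of_forall fun z => by
      rw [Real.norm_eq_abs, abs_of_nonneg (hV0 z)]; exact hC z
  have hIntnn : ∀ y : Y, 0 ≤ ∫ z, V z ∂(T y) := fun y => integral_nonneg hV0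
  have hRleV : ∀ y, R y ≤ V y := fun y => by
    have := hBellman y
    nlinarith [hIntnn y]
  have hiVleint : ∀ y : Y, (⨅ z, V z) ≤ ∫ z, V z ∂(T y) := by
    intro y
    have h1 : ∫ _z, (⨅ z, V z) ∂(T y) ≤ ∫ z, V z ∂(T y) :=
      integral_mono (integrable_const _) (hInt y) (fun z => ciInf_le hVbb z)
    simpa [integral_const] using h1
  have hπnn : ∀ p p', 0 ≤ π p p' := by
    rintro (q | ⟨⟩) (q' | ⟨⟩)
    · rw [hπ1]; exact ENNReal.toReal_nonneg
    · rw [hπ2]; exact ENNReal.toReal_nonneg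
    · rw [hπ4]
    · rw [hπ3]; norm_num
  have hRlnn : ∀ p, 0 ≤ Rlow p := by
    rintro (q | ⟨⟩)
    · rw [hRl1]
      exact Real.sInf_nonneg (by rintro _ ⟨y, _, rfl⟩; exact hR0 y)
    · rw [hRl2]; exact Real.iInf_nonneg hR0
  have hVlnn : ∀ i p, 0 ≤ Vlow i p := by
    intro i
    induction i with
    | zero => intro p; rw [hVl0]; exact hRlnn p
    | succ i ih =>
      intro p
      rw [hVlsucc]
      have hs : 0 ≤ ∑ p' : Q ⊕ Unit, π p p' * Vlow i p' :=
        Finset.sum_nonneg fun p' _ => mul_nonneg (hπnn p p') (ih p')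
      exact add_nonneg (hRlnn p) (mul_nonneg hγ0 hs)
  intro i
  induction i with
  | zero =>
    constructor
    · rw [hVl0, hRl2]; exact ciInf_mono hRbb hRleV
    · intro q
      rw [hVl0, hRl1]
      refine le_csInf ((hcne q).image V) ?_
      rintro _ ⟨y, hy, rfl⟩
      exact (csInf_le (hRbbc q) ⟨y, hy, rfl⟩).trans (hRleV y)
  | succ i ih =>
    obtain ⟨ihu, ihq⟩ := ih
    constructor
    · rw [hVlsucc, hRl2]
      have hsum : ∑ p' : Q ⊕ Unit, π (Sum.inr ()) p' * Vlow i p'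
          = Vlow i (Sum.inr ()) := by
        rw [Fintype.sum_sum_type]
        simp [hπ3, hπ4]
      rw [hsum]
      refine le_ciInf fun y => ?_
      have h1 : (⨅ z, R z) ≤ R y := ciInf_le hRbb y
      have h2 : Vlow i (Sum.inr ()) ≤ ∫ z, V z ∂(T y) := ihu.trans (hiVleint y)
      have hb := hBellman y
      nlinarith [mul_le_mul_of_nonneg_left h2 hγ0]
    · intro q
      rw [hVlsucc, hRl1]
      set μ := T (ystar q) with hμ
      have hsplit : ∫ z, V z ∂μ = (∫ z in X, V z ∂μ) + ∫ z in Xᶜ, V z ∂μ :=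
        (integral_add_compl hXmeas (hInt _)).symm
      have hXeq : X = ⋃ q' ∈ Finset.univ, c q' := by simp [hX]
      have hXint : ∫ z in X, V z ∂μ = ∑ q' : Q, ∫ z in c q', V z ∂μ := by
        rw [hXeq]
        exact integral_biUnion_finset Finset.univ (fun q' _ => hcmeas q')
          (fun a _ b _ hab => hcdisj a b hab) (fun q' _ => (hInt _).integrableOn)
      have hterm : ∀ q', π (Sum.inl q) (Sum.inl q') * Vlow i (Sum.inl q')
          ≤ ∫ z in c q', V z ∂μ := by
        intro q'
        have h1 : π (Sum.inl q) (Sum.inl q') * Vlow i (Sum.inl q')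
            ≤ (μ (c q')).toReal * sInf (V '' c q') := by
          rw [hπ1]
          exact mul_le_mul_of_nonneg_left (ihq q') ENNReal.toReal_nonneg
        refine h1.trans ?_
        have h2 : ∫ _z in c q', sInf (V '' c q') ∂μ ≤ ∫ z in c q', V z ∂μ :=
          setIntegral_mono_on (integrable_const _) (hInt _).integrableOn (hcmeas q')
            (fun z hz => csInf_le (hVbbc q') ⟨z, hz, rfl⟩)
        simpa [setIntegral_const, smul_eq_mul, Measure.real] using h2
      have huns : π (Sum.inl q) (Sum.inr ()) * Vlow i (Sum.inr ())
          ≤ ∫ z in Xᶜ, V z ∂μ := by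
        have h1 : π (Sum.inl q) (Sum.inr ()) * Vlow i (Sum.inr ())
            ≤ (μ Xᶜ).toReal * (⨅ z, V z) := by
          rw [hπ2]
          exact mul_le_mul_of_nonneg_left ihu ENNReal.toReal_nonneg
        refine h1.trans ?_
        have h2 : ∫ _z in Xᶜ, (⨅ z, V z) ∂μ ≤ ∫ z in Xᶜ, V z ∂μ :=
          setIntegral_mono_on (integrable_const _) (hInt _).integrableOn hXmeas.compl
            (fun z _ => ciInf_le hVbb z)
        simpa [setIntegral_const, smul_eq_mul, Measure.real] using h2
      have hS : ∑ p' : Q ⊕ Unit, π (Sum.inl q) p' * Vlow i p' ≤ ∫ z, V z ∂μ := by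
        rw [Fintype.sum_sum_type, hsplit, hXint]
        refine add_le_add (Finset.sum_le_sum fun q' _ => hterm q') ?_
        simpa using huns
      have hRle : sInf (R '' c q) ≤ R (ystar q) := csInf_le (hRbbc q) ⟨_, hystar q, rfl⟩
      calc sInf (R '' c q) + γ * ∑ p' : Q ⊕ Unit, π (Sum.inl q) p' * Vlow i p'
          ≤ R (ystar q) + γ * ∫ z, V z ∂μ :=
            add_le_add hRle (mul_le_mul_of_nonneg_left hS hγ0)
        _ = V (ystar q) := (hBellman _).symm
        _ = sInf (V '' c q) := hystarV q
end

section
/- If V̲ : Q ⊕ {uns} → ℝ satisfies the fixed-point (Bellman) equations V̲(p) = R̲(p) + γ · ∑_{p'∈Q⊕{uns}} π(p,p')·V̲(p') for all p ∈ Q ⊕ {uns}, then V̲(uns) ≤ inf_{y∈Y} V(y), and V̲(q) ≤ inf_{y∈c(q)} V(y) for every q ∈ Q. -/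
open MeasureTheory ProbabilityTheory

theorem lower_fixed_point_le
    {Y : Type*} [MeasurableSpace Y]
    (T : Kernel Y Y) [IsMarkovKernel T]
    (γ : ℝ) (hγ0 : 0 ≤ γ) (hγ1 : γ < 1)
    (Rmax : ℝ) (hRmax : 0 ≤ Rmax)
    (R : Y → ℝ) (hRmeas : Measurable R)
    (hR0 : ∀ y, 0 ≤ R y) (hRb : ∀ y, R y ≤ Rmax)
    (V : Y → ℝ) (hVmeas : Measurable V)
    (hVbdd : ∃ C, ∀ y, V y ≤ C) (hV0 : ∀ y, 0 ≤ V y)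
    (hBellman : ∀ y, V y = R y + γ * ∫ y', V y' ∂(T y))
    {Q : Type*} [Fintype Q] [Nonempty Q]
    (c : Q → Set Y) (hcne : ∀ q, (c q).Nonempty)
    (hcmeas : ∀ q, MeasurableSet (c q))
    (hcdisj : ∀ q q', q ≠ q' → Disjoint (c q) (c q'))
    (X : Set Y) (hX : X = ⋃ q, c q)
    (ystar : Q → Y) (hystar : ∀ q, ystar q ∈ c q)
    (hystarV : ∀ q, V (ystar q) = sInf (V '' c q))
    (π : (Q ⊕ Unit) → (Q ⊕ Unit) → ℝ)
    (hπ1 : ∀ q q', π (Sum.inl q) (Sum.inl q') = ((T (ystar q)) (c q')).toReal)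
    (hπ2 : ∀ q, π (Sum.inl q) (Sum.inr ()) = ((T (ystar q)) Xᶜ).toReal)
    (hπ3 : π (Sum.inr ()) (Sum.inr ()) = 1)
    (hπ4 : ∀ q', π (Sum.inr ()) (Sum.inl q') = 0)
    (Rlow : (Q ⊕ Unit) → ℝ)
    (hRl1 : ∀ q, Rlow (Sum.inl q) = sInf (R '' c q))
    (hRl2 : Rlow (Sum.inr ()) = ⨅ y, R y)
    (Vlow : (Q ⊕ Unit) → ℝ)
    (hVfix : ∀ p, Vlow p
      = Rlow p + γ * ∑ p' : Q ⊕ Unit, π p p' * Vlow p') :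
    (Vlow (Sum.inr ()) ≤ ⨅ y, V y) ∧
      (∀ q, Vlow (Sum.inl q) ≤ sInf (V '' c q)) := by
  classical
  have hYne : Nonempty Y := ⟨(hcne (Classical.arbitrary Q)).choose⟩
  obtain ⟨C, hC⟩ := hVbdd
  have hVbb : BddBelow (Set.range V) := ⟨0, by rintro _ ⟨y, rfl⟩; exact hV0 y⟩
  have hVbbs : ∀ q, BddBelow (V '' c q) := fun q => ⟨0, by rintro _ ⟨y, _, rfl⟩; exact hV0 y⟩
  have hRbb : BddBelow (Set.range R) := ⟨0, by rintro _ ⟨y, rfl⟩; exact hR0 y⟩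
  have hRbbs : ∀ q, BddBelow (R '' c q) := fun q => ⟨0, by rintro _ ⟨y, _, rfl⟩; exact hR0 y⟩
  have hXmeas : MeasurableSet X := hX ▸ MeasurableSet.iUnion (fun q => hcmeas q)
  have hVint : ∀ μ : Measure Y, IsProbabilityMeasure μ → Integrable V μ := by
    intro μ hμ
    refine ⟨hVmeas.aestronglyMeasurable, ?_⟩
    apply HasFiniteIntegral.mono' (g := fun _ => C)
      (hasFiniteIntegral_const C)
    filter_upwards with y
    rw [Real.norm_eq_abs, abs_of_nonneg (hV0 y)]
    exact hC y
  -- W : the target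
  set W : (Q ⊕ Unit) → ℝ := fun p => Sum.elim (fun q => sInf (V '' c q)) (fun _ => ⨅ y, V y) p
    with hW
  -- infimum bound on full integrals
  have hinfV_le_int : ∀ μ : Measure Y, IsProbabilityMeasure μ → (⨅ y, V y) ≤ ∫ y, V y ∂μ := by
    intro μ hμ
    calc (⨅ y, V y) = ∫ _, (⨅ y, V y) ∂μ := by simp
    _ ≤ ∫ y, V y ∂μ :=
        integral_mono (integrable_const _) (hVint μ hμ) (fun y => ciInf_le hVbb y)
  -- super fixed point property of W
  have hWsup : ∀ p, Rlow p + γ * ∑ p' : Q ⊕ Unit, π p p' * W p' ≤ W p := by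
    rintro (q | u)
    · -- inl case
      have hμ : IsProbabilityMeasure (T (ystar q)) := inferInstance
      have hint := hVint (T (ystar q)) hμ
      have hdisj : Pairwise (Function.onFun Disjoint c) := fun a b hab => hcdisj a b hab
      have hsplit : ∫ y, V y ∂(T (ystar q))
          = (∑ q', ∫ y in c q', V y ∂(T (ystar q))) + ∫ y in Xᶜ, V y ∂(T (ystar q)) := by
        rw [← integral_add_compl hXmeas hint, hX,
          integral_iUnion_fintype hcmeas hdisj (fun i => hint.integrableOn)]
      have hterm : ∀ q', π (Sum.inl q) (Sum.inl q') * W (Sum.inl q')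
          ≤ ∫ y in c q', V y ∂(T (ystar q)) := by
        intro q'
        rw [hπ1, hW]
        simp only [Sum.elim_inl]
        rw [mul_comm]
        have h := setIntegral_ge_of_const_le (hcmeas q') (measure_ne_top _ _)
          (fun x hx => csInf_le (hVbbs q') ⟨x, hx, rfl⟩) hint.integrableOn
        rw [measureReal_def, smul_eq_mul, mul_comm] at h
        exact h
      have htermc : π (Sum.inl q) (Sum.inr ()) * W (Sum.inr ())
          ≤ ∫ y in Xᶜ, V y ∂(T (ystar q)) := by
        rw [hπ2, hW]
        simp only [Sum.elim_inr]
        rw [mul_comm]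
        have h := setIntegral_ge_of_const_le hXmeas.compl (measure_ne_top _ _)
          (fun x _ => ciInf_le hVbb x) hint.integrableOn
        rw [measureReal_def, smul_eq_mul, mul_comm] at h
        exact h
      have hsum : ∑ p' : Q ⊕ Unit, π (Sum.inl q) p' * W p' ≤ ∫ y, V y ∂(T (ystar q)) := by
        rw [Fintype.sum_sum_type, hsplit]
        gcongr
        · exact hterm _
        · simpa using htermc
      have hRle : Rlow (Sum.inl q) ≤ R (ystar q) := by
        rw [hRl1]; exact csInf_le (hRbbs q) ⟨ystar q, hystar q, rfl⟩
      have : Rlow (Sum.inl q) + γ * ∑ p' : Q ⊕ Unit, π (Sum.inl q) p' * W p'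
          ≤ R (ystar q) + γ * ∫ y, V y ∂(T (ystar q)) := by
        gcongr
      calc Rlow (Sum.inl q) + γ * ∑ p' : Q ⊕ Unit, π (Sum.inl q) p' * W p'
          ≤ R (ystar q) + γ * ∫ y, V y ∂(T (ystar q)) := this
        _ = V (ystar q) := (hBellman _).symm
        _ = W (Sum.inl q) := by rw [hystarV q, hW]; simp
    · -- inr case
      have hsum : ∑ p' : Q ⊕ Unit, π (Sum.inr ()) p' * W p' = W (Sum.inr ()) := by
        rw [Fintype.sum_sum_type]
        simp [hπ4, hπ3]
      rw [hsum, hRl2]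
      refine le_ciInf (fun y => ?_)
      have h1 : (⨅ y, R y) ≤ R y := ciInf_le hRbb y
      have h2 : W (Sum.inr ()) ≤ ∫ y', V y' ∂(T y) := by
        rw [hW]; exact hinfV_le_int (T y) inferInstance
      calc (⨅ y, R y) + γ * W (Sum.inr ()) ≤ R y + γ * ∫ y', V y' ∂(T y) := by gcongr
        _ = V y := (hBellman y).symm
  -- row properties of π
  have hπnn : ∀ p p', 0 ≤ π p p' := by
    rintro (q | u) (q' | u')
    · rw [hπ1]; exact ENNReal.toReal_nonneg
    · rw [hπ2]; exact ENNReal.toReal_nonneg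
    · rw [hπ4]
    · rw [hπ3]; norm_num
  have hrow : ∀ p, ∑ p' : Q ⊕ Unit, π p p' = 1 := by
    rintro (q | u)
    · rw [Fintype.sum_sum_type]
      simp only [hπ1, hπ2]
      have hμ : IsProbabilityMeasure (T (ystar q)) := inferInstance
      have hdisj : Pairwise (Function.onFun Disjoint c) := fun a b hab => hcdisj a b hab
      have hXm : (T (ystar q)) X = ∑ q', (T (ystar q)) (c q') := by
        rw [hX, measure_iUnion hdisj hcmeas, tsum_fintype]
      have hadd : (T (ystar q)) X + (T (ystar q)) Xᶜ = 1 := by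
        rw [measure_add_measure_compl hXmeas, measure_univ]
      have := congrArg ENNReal.toReal hadd
      rw [ENNReal.toReal_add (measure_ne_top _ _) (measure_ne_top _ _), hXm,
        ENNReal.toReal_sum (fun a _ => measure_ne_top _ _)] at this
      simpa using this
    · rw [Fintype.sum_sum_type]
      simp [hπ4, hπ3]
  -- contraction step
  obtain ⟨p0, hp0⟩ := Finite.exists_max (fun p => Vlow p - W p)
  set D := Vlow p0 - W p0 with hD
  have hkey : ∀ p, Vlow p - W p ≤ γ * D := by
    intro p
    have h1 : Vlow p - W p ≤ γ * ∑ p' : Q ⊕ Unit, π p p' * (Vlow p' - W p') := by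
      have := hWsup p
      rw [hVfix p]
      have hdist : ∑ p' : Q ⊕ Unit, π p p' * (Vlow p' - W p')
          = (∑ p' : Q ⊕ Unit, π p p' * Vlow p') - ∑ p' : Q ⊕ Unit, π p p' * W p' := by
        rw [← Finset.sum_sub_distrib]
        exact Finset.sum_congr rfl (fun p' _ => by ring)
      rw [hdist, mul_sub]
      linarith
    have h2 : ∑ p' : Q ⊕ Unit, π p p' * (Vlow p' - W p') ≤ D := by
      calc ∑ p' : Q ⊕ Unit, π p p' * (Vlow p' - W p')
          ≤ ∑ p' : Q ⊕ Unit, π p p' * D :=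
            Finset.sum_le_sum (fun p' _ => mul_le_mul_of_nonneg_left (hp0 p') (hπnn p p'))
        _ = D := by rw [← Finset.sum_mul, hrow, one_mul]
    calc Vlow p - W p ≤ γ * ∑ p' : Q ⊕ Unit, π p p' * (Vlow p' - W p') := h1
      _ ≤ γ * D := by exact mul_le_mul_of_nonneg_left h2 hγ0
  have hD0 : D ≤ 0 := by
    have := hkey p0
    rw [← hD] at this
    nlinarith
  have hle : ∀ p, Vlow p ≤ W p := by
    intro p
    have := (hp0 p).trans hD0
    linarith
  exact ⟨hle (Sum.inr ()), fun q => hle (Sum.inl q)⟩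
end

section
/- If V̄ : Q ⊕ {uns} → ℝ satisfies the fixed-point (Bellman) equations V̄(p) = R̄(p) + γ · ∑_{p'∈Q⊕{uns}} π(p,p')·V̄(p') for all p ∈ Q ⊕ {uns}, then V̄(uns) ≥ sup_{y∈Y} V(y), and V̄(q) ≥ sup_{y∈c(q)} V(y) for every q ∈ Q. -/
open MeasureTheory ProbabilityTheory

theorem upper_fixed_point_ge
    {Y : Type*} [MeasurableSpace Y]
    (T : Kernel Y Y) [IsMarkovKernel T]
    (γ : ℝ) (hγ0 : 0 ≤ γ) (hγ1 : γ < 1)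
    (Rmax : ℝ) (hRmax : 0 ≤ Rmax)
    (R : Y → ℝ) (hRmeas : Measurable R)
    (hR0 : ∀ y, 0 ≤ R y) (hRb : ∀ y, R y ≤ Rmax)
    (V : Y → ℝ) (hVmeas : Measurable V)
    (hVbdd : ∃ C, ∀ y, V y ≤ C) (hV0 : ∀ y, 0 ≤ V y)
    (hBellman : ∀ y, V y = R y + γ * ∫ y', V y' ∂(T y))
    {Q : Type*} [Fintype Q] [Nonempty Q]
    (c : Q → Set Y) (hcne : ∀ q, (c q).Nonempty)
    (hcmeas : ∀ q, MeasurableSet (c q))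
    (hcdisj : ∀ q q', q ≠ q' → Disjoint (c q) (c q'))
    (X : Set Y) (hX : X = ⋃ q, c q)
    (ystar : Q → Y) (hystar : ∀ q, ystar q ∈ c q)
    (hystarV : ∀ q, V (ystar q) = sSup (V '' c q))
    (π : (Q ⊕ Unit) → (Q ⊕ Unit) → ℝ)
    (hπ1 : ∀ q q', π (Sum.inl q) (Sum.inl q') = ((T (ystar q)) (c q')).toReal)
    (hπ2 : ∀ q, π (Sum.inl q) (Sum.inr ()) = ((T (ystar q)) Xᶜ).toReal)
    (hπ3 : π (Sum.inr ()) (Sum.inr ()) = 1)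
    (hπ4 : ∀ q', π (Sum.inr ()) (Sum.inl q') = 0)
    (Rupp : (Q ⊕ Unit) → ℝ)
    (hRl1 : ∀ q, Rupp (Sum.inl q) = sSup (R '' c q))
    (hRl2 : Rupp (Sum.inr ()) = ⨆ y, R y)
    (Vupp : (Q ⊕ Unit) → ℝ)
    (hVfix : ∀ p, Vupp p
      = Rupp p + γ * ∑ p' : Q ⊕ Unit, π p p' * Vupp p') :
    ((⨆ y, V y) ≤ Vupp (Sum.inr ())) ∧
      (∀ q, sSup (V '' c q) ≤ Vupp (Sum.inl q)) := by
  classical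
  obtain ⟨C, hC⟩ := hVbdd
  haveI : Nonempty Y := ⟨(hcne (Classical.arbitrary Q)).choose⟩
  have hVbddR : BddAbove (Set.range V) := ⟨C, by rintro _ ⟨y, rfl⟩; exact hC y⟩
  have hRbddR : BddAbove (Set.range R) := ⟨Rmax, by rintro _ ⟨y, rfl⟩; exact hRb y⟩
  have hVbddS : ∀ q, BddAbove (V '' c q) := fun q =>
    ⟨C, by rintro _ ⟨y, _, rfl⟩; exact hC y⟩
  have hRbddS : ∀ q, BddAbove (R '' c q) := fun q =>
    ⟨Rmax, by rintro _ ⟨y, _, rfl⟩; exact hRb y⟩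
  set B : ℝ := ⨆ y, V y with hB
  have hVleB : ∀ y, V y ≤ B := fun y => le_ciSup hVbddR y
  have hXmeas : MeasurableSet X := hX ▸ MeasurableSet.iUnion hcmeas
  -- integrability
  have hInt : ∀ μ : Measure Y, IsProbabilityMeasure μ → Integrable V μ := by
    intro μ hμ
    refine (integrable_const C).mono' hVmeas.aestronglyMeasurable ?_
    exact Filter.Eventually.of_forall fun y => by
      rw [Real.norm_eq_abs, abs_of_nonneg (hV0 y)]; exact hC y
  -- the upper abstraction t
  set t : Q ⊕ Unit → ℝ := Sum.elim (fun q => sSup (V '' c q)) (fun _ => B) with ht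
  have htleB : ∀ p, t p ≤ B := by
    rintro (q | u)
    · simpa [ht, ← hystarV q] using hVleB (ystar q)
    · simp [ht]
  -- nonnegativity and row sums of π
  have hπnn : ∀ p p', 0 ≤ π p p' := by
    rintro (q | u) (q' | u')
    · rw [hπ1]; exact ENNReal.toReal_nonneg
    · rw [hπ2]; exact ENNReal.toReal_nonneg
    · rw [hπ4]
    · rw [hπ3]; norm_num
  have hrow : ∀ p, ∑ p' : Q ⊕ Unit, π p p' = 1 := by
    rintro (q | u)
    · have hμ : IsProbabilityMeasure (T (ystar q)) := inferInstance
      have hXmeasure : (T (ystar q)) X = ∑ q', (T (ystar q)) (c q') := by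
        rw [hX, measure_iUnion (fun i j hij => hcdisj i j hij) hcmeas, tsum_fintype]
      have htot : (T (ystar q)) X + (T (ystar q)) Xᶜ = 1 := by
        rw [measure_add_measure_compl hXmeas, measure_univ]
      rw [Fintype.sum_sum_type]
      simp only [hπ1, hπ2]
      have hfin : ∀ s : Set Y, (T (ystar q)) s ≠ ⊤ := fun s => measure_ne_top _ s
      have : ∑ q', ((T (ystar q)) (c q')).toReal + ((T (ystar q)) Xᶜ).toReal = 1 := by
        rw [← ENNReal.toReal_sum (fun q' _ => hfin (c q')), ← ENNReal.toReal_add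
          (by rw [← hXmeasure]; exact hfin X) (hfin Xᶜ), ← hXmeasure, htot,
          ENNReal.toReal_one]
      simpa using this
    · rw [Fintype.sum_sum_type]
      simp [hπ3, hπ4]
  -- key one-step inequality
  have hstep : ∀ p, t p ≤ Rupp p + γ * ∑ p' : Q ⊕ Unit, π p p' * t p' := by
    rintro (q | u)
    · -- concrete Bellman at ystar q
      set μ := T (ystar q) with hμdef
      have hμ : IsProbabilityMeasure μ := inferInstance
      have hIntV : Integrable V μ := hInt μ hμ
      -- decompose the integral
      have hIntOn : ∀ s : Set Y, IntegrableOn V s μ := fun s => hIntV.integrableOn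
      have hdecomp : ∫ y', V y' ∂μ = (∑ q', ∫ y' in c q', V y' ∂μ) + ∫ y' in Xᶜ, V y' ∂μ := by
        rw [← integral_add_compl hXmeas hIntV]
        congr 1
        rw [hX, integral_iUnion hcmeas (fun i j hij => hcdisj i j hij)
          (hX ▸ hIntOn X), tsum_fintype]
      have hbound1 : ∀ q', ∫ y' in c q', V y' ∂μ ≤ (μ (c q')).toReal * sSup (V '' c q') := by
        intro q'
        calc ∫ y' in c q', V y' ∂μ ≤ ∫ _ in c q', sSup (V '' c q') ∂μ := by
              refine setIntegral_mono_on (hIntOn (c q')) (integrableOn_const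
                (measure_ne_top _ _)) (hcmeas q') ?_
              intro y hy
              exact le_csSup (hVbddS q') ⟨y, hy, rfl⟩
          _ = (μ (c q')).toReal * sSup (V '' c q') := by
              rw [setIntegral_const]; rfl
      have hbound2 : ∫ y' in Xᶜ, V y' ∂μ ≤ (μ Xᶜ).toReal * B := by
        calc ∫ y' in Xᶜ, V y' ∂μ ≤ ∫ _ in Xᶜ, B ∂μ := by
              refine setIntegral_mono_on (hIntOn Xᶜ) (integrableOn_const
                (measure_ne_top _ _)) hXmeas.compl ?_
              intro y _; exact hVleB y
          _ = (μ Xᶜ).toReal * B := by rw [setIntegral_const]; rfl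
      have hintle : ∫ y', V y' ∂μ ≤ ∑ p' : Q ⊕ Unit, π (Sum.inl q) p' * t p' := by
        rw [hdecomp, Fintype.sum_sum_type]
        simp only [hπ1, hπ2, ht, Sum.elim_inl, Sum.elim_inr]
        gcongr
        · exact hbound1 _
        · simpa using hbound2
      have : t (Sum.inl q) = V (ystar q) := (hystarV q).symm
      rw [this, hBellman (ystar q)]
      have hRle : R (ystar q) ≤ Rupp (Sum.inl q) := by
        rw [hRl1]; exact le_csSup (hRbddS q) ⟨ystar q, hystar q, rfl⟩
      exact add_le_add hRle (mul_le_mul_of_nonneg_left hintle hγ0)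
    · -- abstract unsafe state
      have hsum : ∑ p' : Q ⊕ Unit, π (Sum.inr ()) p' * t p' = B := by
        rw [Fintype.sum_sum_type]
        simp [hπ3, hπ4, ht]
      have : t (Sum.inr u) = B := rfl
      rw [this, hsum, hRl2]
      refine ciSup_le fun y => ?_
      rw [hBellman y]
      have h1 : R y ≤ ⨆ y, R y := le_ciSup hRbddR y
      have h2 : ∫ y', V y' ∂(T y) ≤ B := by
        calc ∫ y', V y' ∂(T y) ≤ ∫ _, B ∂(T y) :=
              integral_mono (hInt _ inferInstance) (integrable_const B) hVleB
          _ = B := by simp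
      exact add_le_add h1 (mul_le_mul_of_nonneg_left h2 hγ0)
  -- contraction argument
  set d : Q ⊕ Unit → ℝ := fun p => t p - Vupp p with hd
  obtain ⟨p0, _, hp0⟩ := Finset.exists_mem_eq_sup' (Finset.univ_nonempty (α := Q ⊕ Unit)) d
  set M : ℝ := Finset.univ.sup' Finset.univ_nonempty d with hM
  have hdleM : ∀ p, d p ≤ M := fun p => Finset.le_sup' d (Finset.mem_univ p)
  have hMle : M ≤ γ * M := by
    have h1 : d p0 ≤ γ * ∑ p' : Q ⊕ Unit, π p0 p' * d p' := by
      have hsumsplit : ∑ p' : Q ⊕ Unit, π p0 p' * d p'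
          = (∑ p' : Q ⊕ Unit, π p0 p' * t p') - ∑ p' : Q ⊕ Unit, π p0 p' * Vupp p' := by
        rw [← Finset.sum_sub_distrib]
        exact Finset.sum_congr rfl fun p' _ => by rw [hd]; ring
      rw [hsumsplit, mul_sub]
      simp only [hd]
      linarith [hstep p0, hVfix p0]
    have h2 : ∑ p' : Q ⊕ Unit, π p0 p' * d p' ≤ M := by
      calc ∑ p' : Q ⊕ Unit, π p0 p' * d p' ≤ ∑ p' : Q ⊕ Unit, π p0 p' * M :=
            Finset.sum_le_sum fun p' _ =>
              mul_le_mul_of_nonneg_left (hdleM p') (hπnn p0 p')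
        _ = M := by rw [← Finset.sum_mul, hrow p0, one_mul]
    calc M = d p0 := hp0
      _ ≤ γ * ∑ p' : Q ⊕ Unit, π p0 p' * d p' := h1
      _ ≤ γ * M := mul_le_mul_of_nonneg_left h2 hγ0
  have hM0 : M ≤ 0 := by nlinarith
  have hfinal : ∀ p, t p ≤ Vupp p := fun p => by
    have := le_trans (hdleM p) hM0
    simp only [hd] at this; linarith
  exact ⟨hfinal (Sum.inr ()), fun q => hfinal (Sum.inl q)⟩
end

section
/- Let p₀ be a probability measure on Y and suppose V̲ : Q ⊕ {uns} → ℝ satisfies the fixed-point equations V̲(p) = R̲(p) + γ · ∑_{p'∈Q⊕{uns}} π(p,p')·V̲(p') for all p ∈ Q ⊕ {uns}. Then V̲(uns)·p₀(Xᶜ) + ∑_{q∈Q} V̲(q)·p₀(c(q)) ≤ ∫_Y V(y) p₀(dy), where the measures p₀(Xᶜ) and p₀(c(q)) are taken as real numbers. -/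
open MeasureTheory ProbabilityTheory

theorem lower_fixed_point_init_le
    {Y : Type*} [MeasurableSpace Y]
    (T : Kernel Y Y) [IsMarkovKernel T]
    (γ : ℝ) (hγ0 : 0 ≤ γ) (hγ1 : γ < 1)
    (Rmax : ℝ) (hRmax : 0 ≤ Rmax)
    (R : Y → ℝ) (hRmeas : Measurable R)
    (hR0 : ∀ y, 0 ≤ R y) (hRb : ∀ y, R y ≤ Rmax)
    (V : Y → ℝ) (hVmeas : Measurable V)
    (hVbdd : ∃ C, ∀ y, V y ≤ C) (hV0 : ∀ y, 0 ≤ V y)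
    (hBellman : ∀ y, V y = R y + γ * ∫ y', V y' ∂(T y))
    {Q : Type*} [Fintype Q] [Nonempty Q]
    (c : Q → Set Y) (hcne : ∀ q, (c q).Nonempty)
    (hcmeas : ∀ q, MeasurableSet (c q))
    (hcdisj : ∀ q q', q ≠ q' → Disjoint (c q) (c q'))
    (X : Set Y) (hX : X = ⋃ q, c q)
    (ystar : Q → Y) (hystar : ∀ q, ystar q ∈ c q)
    (hystarV : ∀ q, V (ystar q) = sInf (V '' c q))
    (π : (Q ⊕ Unit) → (Q ⊕ Unit) → ℝ)
    (hπ1 : ∀ q q', π (Sum.inl q) (Sum.inl q') = ((T (ystar q)) (c q')).toReal)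
    (hπ2 : ∀ q, π (Sum.inl q) (Sum.inr ()) = ((T (ystar q)) Xᶜ).toReal)
    (hπ3 : π (Sum.inr ()) (Sum.inr ()) = 1)
    (hπ4 : ∀ q', π (Sum.inr ()) (Sum.inl q') = 0)
    (Rlow : (Q ⊕ Unit) → ℝ)
    (hRl1 : ∀ q, Rlow (Sum.inl q) = sInf (R '' c q))
    (hRl2 : Rlow (Sum.inr ()) = ⨅ y, R y)
    (p₀ : Measure Y) [IsProbabilityMeasure p₀]
    (Vlow : (Q ⊕ Unit) → ℝ)
    (hVfix : ∀ p, Vlow p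
      = Rlow p + γ * ∑ p' : Q ⊕ Unit, π p p' * Vlow p') :
    Vlow (Sum.inr ()) * (p₀ Xᶜ).toReal
      + ∑ q : Q, Vlow (Sum.inl q) * (p₀ (c q)).toReal
      ≤ ∫ y, V y ∂p₀ := by
  classical
  haveI : Nonempty Y := ⟨ystar (Classical.arbitrary Q)⟩
  obtain ⟨C, hC⟩ := hVbdd
  -- integrability of V w.r.t. any probability measure
  have hVint : ∀ (μ : Measure Y), IsProbabilityMeasure μ → Integrable V μ := by
    intro μ hμ
    refine (integrable_const C).mono' hVmeas.aestronglyMeasurable ?_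
    filter_upwards with y
    rw [Real.norm_eq_abs, abs_of_nonneg (hV0 y)]
    exact hC y
  have hXmeas : MeasurableSet X := hX ▸ MeasurableSet.iUnion hcmeas
  have hpair : Pairwise (Function.onFun Disjoint c) := fun q q' h => hcdisj q q' h
  -- m = inf of V
  set m : ℝ := ⨅ y, V y with hm_def
  have hVbb : BddBelow (Set.range V) := ⟨0, fun x ⟨y, hy⟩ => hy ▸ hV0 y⟩
  have hm_le : ∀ y, m ≤ V y := fun y => ciInf_le hVbb y
  have hm0 : 0 ≤ m := le_ciInf hV0
  have hVq_le : ∀ q, ∀ y ∈ c q, V (ystar q) ≤ V y := by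
    intro q y hy
    rw [hystarV q]
    exact csInf_le ⟨0, fun x ⟨z, _, hz⟩ => hz ▸ hV0 z⟩ ⟨y, hy, rfl⟩
  -- key integral lower bound for any probability measure
  have key : ∀ (μ : Measure Y), IsProbabilityMeasure μ →
      m * (μ Xᶜ).toReal + ∑ q : Q, V (ystar q) * (μ (c q)).toReal ≤ ∫ y, V y ∂μ := by
    intro μ hμ
    have hint := hVint μ hμ
    have hsplit : ∫ y, V y ∂μ = (∫ y in Xᶜ, V y ∂μ) + ∫ y in X, V y ∂μ := by
      rw [add_comm, integral_add_compl hXmeas hint]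
    have hXint : ∫ y in X, V y ∂μ = ∑ q : Q, ∫ y in c q, V y ∂μ := by
      rw [hX]
      exact integral_iUnion_fintype hcmeas hpair (fun q => hint.integrableOn)
    rw [hsplit, hXint]
    gcongr
    · exact setIntegral_ge_of_const_le_real hXmeas.compl (measure_ne_top μ _)
        (fun y _ => hm_le y) hint.integrableOn
    · rename_i q _
      exact setIntegral_ge_of_const_le_real (hcmeas q) (measure_ne_top μ _)
        (hVq_le q) hint.integrableOn
  -- super fixed point f
  set f : (Q ⊕ Unit) → ℝ := Sum.elim (fun q => V (ystar q)) (fun _ => m) with hf_def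
  have hm_R : (⨅ y, R y) + γ * m ≤ m := by
    have hRbb : BddBelow (Set.range R) := ⟨0, fun x ⟨y, hy⟩ => hy ▸ hR0 y⟩
    refine le_ciInf fun y => ?_
    have h1 : (⨅ y, R y) ≤ R y := ciInf_le hRbb y
    have h2 : m ≤ ∫ y', V y' ∂(T y) := by
      have : ∫ _ , m ∂(T y) ≤ ∫ y', V y' ∂(T y) :=
        integral_mono (integrable_const m) (hVint _ inferInstance) hm_le
      simpa using this
    calc (⨅ y, R y) + γ * m ≤ R y + γ * ∫ y', V y' ∂(T y) := by
          exact add_le_add h1 (mul_le_mul_of_nonneg_left h2 hγ0)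
      _ = V y := (hBellman y).symm
  have hf : ∀ p, Rlow p + γ * ∑ p' : Q ⊕ Unit, π p p' * f p' ≤ f p := by
    intro p
    rcases p with q | u
    · have hRlq : Rlow (Sum.inl q) ≤ R (ystar q) := by
        rw [hRl1 q]
        exact csInf_le ⟨0, fun x ⟨z, _, hz⟩ => hz ▸ hR0 z⟩ ⟨ystar q, hystar q, rfl⟩
      have hsum : ∑ p' : Q ⊕ Unit, π (Sum.inl q) p' * f p'
          = m * ((T (ystar q)) Xᶜ).toReal
            + ∑ q' : Q, V (ystar q') * ((T (ystar q)) (c q')).toReal := by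
        rw [Fintype.sum_sum_type]
        simp only [hπ1, hπ2, hf_def, Sum.elim_inl, Sum.elim_inr,
          Finset.univ_unique, Finset.sum_singleton]
        rw [add_comm]
        congr 1
        · exact mul_comm _ _
        · exact Finset.sum_congr rfl fun q' _ => mul_comm _ _
      have := key (T (ystar q)) inferInstance
      calc Rlow (Sum.inl q) + γ * ∑ p' : Q ⊕ Unit, π (Sum.inl q) p' * f p'
          ≤ R (ystar q) + γ * ∫ y, V y ∂(T (ystar q)) := by
            rw [hsum]
            exact add_le_add hRlq (mul_le_mul_of_nonneg_left this hγ0)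
        _ = V (ystar q) := (hBellman _).symm
        _ = f (Sum.inl q) := rfl
    · rcases u with ⟨⟩
      have hsum : ∑ p' : Q ⊕ Unit, π (Sum.inr ()) p' * f p' = m := by
        rw [Fintype.sum_sum_type]
        simp [hπ3, hπ4, hf_def]
      rw [hsum, hRl2]
      exact hm_R
  -- π nonneg and row sums
  have hπnn : ∀ p p', 0 ≤ π p p' := by
    rintro (q | ⟨⟩) (q' | ⟨⟩)
    · rw [hπ1]; exact ENNReal.toReal_nonneg
    · rw [hπ2]; exact ENNReal.toReal_nonneg
    · rw [hπ4]
    · rw [hπ3]; exact one_pos.le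
  have hrow : ∀ p, ∑ p' : Q ⊕ Unit, π p p' = 1 := by
    rintro (q | ⟨⟩)
    · rw [Fintype.sum_sum_type]
      simp only [hπ1, hπ2, Finset.univ_unique, Finset.sum_singleton]
      have hXm : (T (ystar q)) X = ∑ q' : Q, (T (ystar q)) (c q') := by
        rw [hX, measure_iUnion hpair hcmeas, tsum_fintype]
      have h1 : (T (ystar q)) X + (T (ystar q)) Xᶜ = 1 := by
        rw [measure_add_measure_compl hXmeas, measure_univ]
      have h2 : ((T (ystar q)) X).toReal + ((T (ystar q)) Xᶜ).toReal = 1 := by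
        rw [← ENNReal.toReal_add (measure_ne_top _ _) (measure_ne_top _ _), h1]
        simp
      rw [← h2, hXm, ENNReal.toReal_sum (fun q' _ => measure_ne_top _ _)]
    · rw [Fintype.sum_sum_type]
      simp [hπ3, hπ4]
  -- contraction: Vlow ≤ f
  have hle : ∀ p, Vlow p ≤ f p := by
    by_contra hcon
    push_neg at hcon
    set d : (Q ⊕ Unit) → ℝ := fun p => Vlow p - f p with hd_def
    obtain ⟨p₁, _, hp₁⟩ := Finset.exists_mem_eq_sup' (Finset.univ_nonempty (α := Q ⊕ Unit)) d
    set M : ℝ := Finset.univ.sup' Finset.univ_nonempty d with hM_def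
    have hM_ge : ∀ p, d p ≤ M := fun p => Finset.le_sup' d (Finset.mem_univ p)
    have hMpos : 0 < M := by
      obtain ⟨p, hp⟩ := hcon
      exact lt_of_lt_of_le (sub_pos.mpr hp) (hM_ge p)
    have hstep : M ≤ γ * M := by
      have hd1 : d p₁ ≤ γ * ∑ p' : Q ⊕ Unit, π p₁ p' * d p' := by
        have := hf p₁
        have h2 := hVfix p₁
        have : Vlow p₁ - f p₁ ≤ (Rlow p₁ + γ * ∑ p' : Q ⊕ Unit, π p₁ p' * Vlow p')
            - (Rlow p₁ + γ * ∑ p' : Q ⊕ Unit, π p₁ p' * f p') := by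
          rw [← h2]; exact sub_le_sub_left (hf p₁) _
        calc d p₁ ≤ (Rlow p₁ + γ * ∑ p' : Q ⊕ Unit, π p₁ p' * Vlow p')
            - (Rlow p₁ + γ * ∑ p' : Q ⊕ Unit, π p₁ p' * f p') := this
          _ = γ * ∑ p' : Q ⊕ Unit, π p₁ p' * d p' := by
            rw [hd_def]
            simp only [mul_sub]
            rw [Finset.sum_sub_distrib]
            ring
      have hsumle : ∑ p' : Q ⊕ Unit, π p₁ p' * d p' ≤ M := by
        calc ∑ p' : Q ⊕ Unit, π p₁ p' * d p'
            ≤ ∑ p' : Q ⊕ Unit, π p₁ p' * M :=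
              Finset.sum_le_sum fun p' _ =>
                mul_le_mul_of_nonneg_left (hM_ge p') (hπnn p₁ p')
          _ = M := by rw [← Finset.sum_mul, hrow p₁, one_mul]
      calc M = d p₁ := hp₁
        _ ≤ γ * ∑ p' : Q ⊕ Unit, π p₁ p' * d p' := hd1
        _ ≤ γ * M := mul_le_mul_of_nonneg_left hsumle hγ0
    nlinarith
  -- conclusion
  have hfin := key p₀ inferInstance
  refine le_trans ?_ hfin
  gcongr
  · simpa [hf_def] using hle (Sum.inr ())
  · rename_i q _
    simpa [hf_def] using hle (Sum.inl q)
end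

section
/- Let p₀ be a probability measure on Y and suppose V̄ : Q ⊕ {uns} → ℝ satisfies the fixed-point equations V̄(p) = R̄(p) + γ · ∑_{p'∈Q⊕{uns}} π(p,p')·V̄(p') for all p ∈ Q ⊕ {uns}. Then V̄(uns)·p₀(Xᶜ) + ∑_{q∈Q} V̄(q)·p₀(c(q)) ≥ ∫_Y V(y) p₀(dy), where the measures p₀(Xᶜ) and p₀(c(q)) are taken as real numbers. -/
open MeasureTheory ProbabilityTheory

theorem upper_fixed_point_init_ge
    {Y : Type*} [MeasurableSpace Y]
    (T : Kernel Y Y) [IsMarkovKernel T]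
    (γ : ℝ) (hγ0 : 0 ≤ γ) (hγ1 : γ < 1)
    (Rmax : ℝ) (hRmax : 0 ≤ Rmax)
    (R : Y → ℝ) (hRmeas : Measurable R)
    (hR0 : ∀ y, 0 ≤ R y) (hRb : ∀ y, R y ≤ Rmax)
    (V : Y → ℝ) (hVmeas : Measurable V)
    (hVbdd : ∃ C, ∀ y, V y ≤ C) (hV0 : ∀ y, 0 ≤ V y)
    (hBellman : ∀ y, V y = R y + γ * ∫ y', V y' ∂(T y))
    {Q : Type*} [Fintype Q] [Nonempty Q]
    (c : Q → Set Y) (hcne : ∀ q, (c q).Nonempty)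
    (hcmeas : ∀ q, MeasurableSet (c q))
    (hcdisj : ∀ q q', q ≠ q' → Disjoint (c q) (c q'))
    (X : Set Y) (hX : X = ⋃ q, c q)
    (ystar : Q → Y) (hystar : ∀ q, ystar q ∈ c q)
    (hystarV : ∀ q, V (ystar q) = sSup (V '' c q))
    (π : (Q ⊕ Unit) → (Q ⊕ Unit) → ℝ)
    (hπ1 : ∀ q q', π (Sum.inl q) (Sum.inl q') = ((T (ystar q)) (c q')).toReal)
    (hπ2 : ∀ q, π (Sum.inl q) (Sum.inr ()) = ((T (ystar q)) Xᶜ).toReal)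
    (hπ3 : π (Sum.inr ()) (Sum.inr ()) = 1)
    (hπ4 : ∀ q', π (Sum.inr ()) (Sum.inl q') = 0)
    (Rupp : (Q ⊕ Unit) → ℝ)
    (hRl1 : ∀ q, Rupp (Sum.inl q) = sSup (R '' c q))
    (hRl2 : Rupp (Sum.inr ()) = ⨆ y, R y)
    (p₀ : Measure Y) [IsProbabilityMeasure p₀]
    (Vupp : (Q ⊕ Unit) → ℝ)
    (hVfix : ∀ p, Vupp p
      = Rupp p + γ * ∑ p' : Q ⊕ Unit, π p p' * Vupp p') :
    (∫ y, V y ∂p₀)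
      ≤ Vupp (Sum.inr ()) * (p₀ Xᶜ).toReal
        + ∑ q : Q, Vupp (Sum.inl q) * (p₀ (c q)).toReal := by
  classical
  obtain ⟨C, hC⟩ := hVbdd
  have hYne : Nonempty Y := ⟨ystar (Classical.arbitrary Q)⟩
  have hbddV : BddAbove (Set.range V) := ⟨C, by rintro _ ⟨y, rfl⟩; exact hC y⟩
  have hbddR : BddAbove (Set.range R) := ⟨Rmax, by rintro _ ⟨y, rfl⟩; exact hRb y⟩
  set SY : ℝ := ⨆ y, V y with hSYdef
  have hVleSY : ∀ y, V y ≤ SY := fun y => le_ciSup hbddV y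
  have hXmeas : MeasurableSet X := by
    rw [hX]; exact MeasurableSet.iUnion fun q => hcmeas q
  -- integrability of V under any probability measure
  have hint : ∀ (μ : Measure Y), IsProbabilityMeasure μ → Integrable V μ := by
    intro μ hμ
    refine (integrable_const C).mono' hVmeas.aestronglyMeasurable ?_
    exact Filter.Eventually.of_forall fun y => by
      rw [Real.norm_eq_abs, abs_of_nonneg (hV0 y)]; exact hC y
  -- V is bounded on each cell by V at the witness point
  have hbddimg : ∀ q, BddAbove (V '' c q) := fun q =>
    ⟨C, by rintro _ ⟨y, _, rfl⟩; exact hC y⟩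
  have hVcq : ∀ q, ∀ y ∈ c q, V y ≤ V (ystar q) := fun q y hy =>
    (hystarV q) ▸ le_csSup (hbddimg q) ⟨y, hy, rfl⟩
  have hpd : (↑(Finset.univ : Finset Q) : Set Q).PairwiseDisjoint c := by
    intro a _ b _ hab; exact hcdisj a b hab
  -- decomposition bound for any probability measure
  have hdecomp : ∀ (μ : Measure Y), IsProbabilityMeasure μ →
      ∫ y, V y ∂μ ≤ SY * (μ Xᶜ).toReal + ∑ q, V (ystar q) * (μ (c q)).toReal := by
    intro μ hμ
    have hI := hint μ hμ
    have h1 : ∫ y, V y ∂μ = (∫ y in X, V y ∂μ) + (∫ y in Xᶜ, V y ∂μ) :=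
      (integral_add_compl hXmeas hI).symm
    have h2 : ∫ y in X, V y ∂μ = ∑ q, ∫ y in c q, V y ∂μ := by
      rw [hX, integral_iUnion hcmeas (fun a b hab => hcdisj a b hab) hI.integrableOn,
        tsum_fintype]
    have h3 : ∀ q : Q, ∫ y in c q, V y ∂μ ≤ V (ystar q) * (μ (c q)).toReal := by
      intro q
      have := setIntegral_mono_on hI.integrableOn
        ((integrable_const (V (ystar q))).integrableOn) (hcmeas q) (hVcq q)
      rwa [setIntegral_const, smul_eq_mul, mul_comm] at this
    have h4 : ∫ y in Xᶜ, V y ∂μ ≤ SY * (μ Xᶜ).toReal := by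
      have := setIntegral_mono_on hI.integrableOn
        ((integrable_const SY).integrableOn) hXmeas.compl (fun y _ => hVleSY y)
      rwa [setIntegral_const, smul_eq_mul, mul_comm] at this
    calc ∫ y, V y ∂μ = (∑ q, ∫ y in c q, V y ∂μ) + ∫ y in Xᶜ, V y ∂μ := by rw [h1, h2]
      _ ≤ (∑ q, V (ystar q) * (μ (c q)).toReal) + SY * (μ Xᶜ).toReal := by
          exact add_le_add (Finset.sum_le_sum fun q _ => h3 q) h4
      _ = _ := by ring
  -- row sums of cell measures are at most 1
  have hsumb : ∀ (μ : Measure Y), IsProbabilityMeasure μ →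
      ∑ q' : Q, (μ (c q')).toReal ≤ 1 := by
    intro μ hμ
    have h1 : ∑ q' : Q, μ (c q') ≤ 1 := by
      rw [← measure_biUnion_finset hpd (fun b _ => hcmeas b)]
      exact prob_le_one
    have h2 : (∑ q' : Q, μ (c q')).toReal = ∑ q' : Q, (μ (c q')).toReal :=
      ENNReal.toReal_sum fun a _ => measure_ne_top μ (c a)
    rw [← h2]
    exact ENNReal.toReal_le_of_le_ofReal zero_le_one (by simpa using h1)
  -- mean value of V under a probability measure is at most SY
  have hmean : ∀ (μ : Measure Y), IsProbabilityMeasure μ → ∫ y, V y ∂μ ≤ SY := by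
    intro μ hμ
    have := integral_mono (hint μ hμ) (integrable_const SY) hVleSY
    simpa [measure_univ] using this
  -- fixed point equation at uns
  have hfixr : Vupp (Sum.inr ()) = Rupp (Sum.inr ()) + γ * Vupp (Sum.inr ()) := by
    have := hVfix (Sum.inr ())
    rw [Fintype.sum_sum_type] at this
    simpa [hπ3, hπ4] using this
  -- SY ≤ Vupp uns
  have hSYfix : SY ≤ Rupp (Sum.inr ()) + γ * SY := by
    refine ciSup_le fun y => ?_
    rw [hBellman y, hRl2]
    have h1 : R y ≤ ⨆ y, R y := le_ciSup hbddR y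
    have h2 : ∫ y', V y' ∂(T y) ≤ SY := hmean (T y) inferInstance
    nlinarith
  have hSYle : SY ≤ Vupp (Sum.inr ()) := by nlinarith
  -- the key contraction argument on Q
  set Dq : Q → ℝ := fun q => V (ystar q) - Vupp (Sum.inl q) with hDq
  have hne : (Finset.univ : Finset Q).Nonempty := Finset.univ_nonempty
  set D : ℝ := Finset.univ.sup' hne Dq with hD
  set D' : ℝ := max D 0 with hD'
  have hD'0 : 0 ≤ D' := le_max_right _ _
  have hDqD' : ∀ q, Dq q ≤ D' :=
    fun q => le_trans (Finset.le_sup' Dq (Finset.mem_univ q)) (le_max_left _ _)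
  have hkey : ∀ q : Q, Dq q ≤ γ * D' := by
    intro q
    set μ := T (ystar q) with hμdef
    have hμ : IsProbabilityMeasure μ := inferInstance
    -- upper bound on V (ystar q)
    have hRq : R (ystar q) ≤ Rupp (Sum.inl q) := by
      rw [hRl1]; exact le_csSup ⟨Rmax, by rintro _ ⟨y, _, rfl⟩; exact hRb y⟩
        ⟨ystar q, hystar q, rfl⟩
    have hVq : V (ystar q) ≤ Rupp (Sum.inl q)
        + γ * (SY * (μ Xᶜ).toReal + ∑ q', V (ystar q') * (μ (c q')).toReal) := by
      rw [hBellman (ystar q)]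
      have := hdecomp μ hμ
      nlinarith
    -- fixed point at q
    have hfixq : Vupp (Sum.inl q) = Rupp (Sum.inl q)
        + γ * ((∑ q', (μ (c q')).toReal * Vupp (Sum.inl q'))
            + (μ Xᶜ).toReal * Vupp (Sum.inr ())) := by
      have := hVfix (Sum.inl q)
      rw [Fintype.sum_sum_type] at this
      simpa [hπ1, hπ2] using this
    have hterm : ∀ q' : Q, V (ystar q') * (μ (c q')).toReal
        - (μ (c q')).toReal * Vupp (Sum.inl q') ≤ D' * (μ (c q')).toReal := by
      intro q'
      have h1 : Dq q' ≤ D' := hDqD' q'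
      have h2 : (0:ℝ) ≤ (μ (c q')).toReal := ENNReal.toReal_nonneg
      have : Dq q' * (μ (c q')).toReal ≤ D' * (μ (c q')).toReal :=
        mul_le_mul_of_nonneg_right h1 h2
      simp only [hDq] at this
      nlinarith
    have hsum1 : ∑ q' : Q, (V (ystar q') * (μ (c q')).toReal
        - (μ (c q')).toReal * Vupp (Sum.inl q')) ≤ D' * ∑ q' : Q, (μ (c q')).toReal := by
      rw [Finset.mul_sum]
      exact Finset.sum_le_sum fun q' _ => hterm q'
    have hsum2 : D' * ∑ q' : Q, (μ (c q')).toReal ≤ D' := by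
      have := hsumb μ hμ
      nlinarith
    have hcompl : SY * (μ Xᶜ).toReal - (μ Xᶜ).toReal * Vupp (Sum.inr ()) ≤ 0 := by
      have h2 : (0:ℝ) ≤ (μ Xᶜ).toReal := ENNReal.toReal_nonneg
      nlinarith
    have hsplit : (SY * (μ Xᶜ).toReal + ∑ q', V (ystar q') * (μ (c q')).toReal)
        - ((∑ q', (μ (c q')).toReal * Vupp (Sum.inl q'))
            + (μ Xᶜ).toReal * Vupp (Sum.inr ())) ≤ D' := by
      have : (SY * (μ Xᶜ).toReal + ∑ q', V (ystar q') * (μ (c q')).toReal)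
          - ((∑ q', (μ (c q')).toReal * Vupp (Sum.inl q'))
              + (μ Xᶜ).toReal * Vupp (Sum.inr ()))
          = (SY * (μ Xᶜ).toReal - (μ Xᶜ).toReal * Vupp (Sum.inr ()))
            + ∑ q' : Q, (V (ystar q') * (μ (c q')).toReal
                - (μ (c q')).toReal * Vupp (Sum.inl q')) := by
        rw [Finset.sum_sub_distrib]; ring
      rw [this]
      linarith [le_trans hsum1 hsum2]
    simp only [hDq]
    nlinarith
  have hDle : D ≤ γ * D' := Finset.sup'_le hne Dq fun q _ => hkey q
  have hD'le : D' ≤ γ * D' := max_le hDle (by nlinarith)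
  have hD'eq : D' ≤ 0 := by nlinarith
  have hVq' : ∀ q, V (ystar q) ≤ Vupp (Sum.inl q) := by
    intro q
    have := le_trans (hDqD' q) hD'eq
    simp only [hDq] at this
    linarith
  -- conclude
  have hfin := hdecomp p₀ inferInstance
  have h1 : SY * (p₀ Xᶜ).toReal ≤ Vupp (Sum.inr ()) * (p₀ Xᶜ).toReal :=
    mul_le_mul_of_nonneg_right hSYle ENNReal.toReal_nonneg
  have h2 : ∑ q, V (ystar q) * (p₀ (c q)).toReal
      ≤ ∑ q, Vupp (Sum.inl q) * (p₀ (c q)).toReal :=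
    Finset.sum_le_sum fun q _ =>
      mul_le_mul_of_nonneg_right (hVq' q) ENNReal.toReal_nonneg
  linarith
end

section
/- Let ι be a nonempty index set and A, B, C : ι → ℱ families of measurable events such that μ(B(x) ∩ C(x)) > 0 and μ(B(x) ∩ (C(x))ᶜ) > 0 for every x ∈ ι. Then inf_{x∈ι} μ(A(x) | B(x) ∩ (C(x))ᶜ) ≥ [ inf_{x∈ι} μ(A(x) | B(x)) − ( sup_{x∈ι} μ(A(x) | B(x) ∩ C(x)) ) · ( sup_{x∈ι} μ(C(x) | B(x)) ) ] / ( 1 − inf_{x∈ι} μ(C(x) | B(x)) ). -/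
/- The law of total probability `P(A|B) = P(A|B∩C) P(C|B) + P(A|B∩Cᶜ) (1 - P(C|B))` makes
`P(A|B∩Cᶜ) (1 - P(C|B))` at least `inf P(A|B) - sup P(A|B∩C) · sup P(C|B)` for every index;
dividing by `1 - P(C|B) ≤ 1 - inf P(C|B)` gives the bound. -/

open MeasureTheory

/-- Conditional probability `μ(E | F) = μ(E ∩ F) / μ(F)`, as a real number. -/
noncomputable def condP {Ω : Type*} [MeasurableSpace Ω] (μ : Measure Ω)
    (E F : Set Ω) : ℝ :=
  (μ (E ∩ F)).toReal / (μ F).toReal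

/-- The implications make this hold also when `c` or `d` vanishes, where `x / 0 = 0`. -/
theorem add_div_add_eq_div_mul_add_div_mul {a b c d : ℝ} (hc : 0 ≤ c) (hd : 0 ≤ d)
    (hac : c = 0 → a = 0) (hbd : d = 0 → b = 0) :
    (a + b) / (c + d) = a / c * (c / (c + d)) + b / d * (1 - c / (c + d)) := by
  rcases (add_nonneg hc hd).eq_or_lt with hcd | hcd
  · obtain ⟨rfl, rfl⟩ : c = 0 ∧ d = 0 := ⟨by linarith, by linarith⟩
    simp
  · rw [one_sub_div hcd.ne', add_sub_cancel_left, ← mul_div_assoc, ← mul_div_assoc,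
      div_mul_cancel_of_imp hac, div_mul_cancel_of_imp hbd, add_div]

theorem le_iInf_of_eq_mul_add_mul {ι : Type*} [Nonempty ι] {p q r s : ι → ℝ}
    (h : ∀ x, p x = q x * r x + s x * (1 - r x))
    (hp : BddBelow (Set.range p)) (hq : BddAbove (Set.range q)) (hr : BddAbove (Set.range r))
    (hq₀ : ∀ x, 0 ≤ q x) (hr₀ : ∀ x, 0 ≤ r x) (hr₁ : ∀ x, r x < 1) (hs₀ : ∀ x, 0 ≤ s x) :
    ((⨅ x, p x) - (⨆ x, q x) * (⨆ x, r x)) / (1 - ⨅ x, r x) ≤ ⨅ x, s x := by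
  have hr' : BddBelow (Set.range r) := ⟨0, Set.forall_mem_range.2 hr₀⟩
  refine le_ciInf fun x => ?_
  have hrx : 0 < 1 - r x := sub_pos.2 (hr₁ x)
  by_cases hN : (⨅ x, p x) - (⨆ x, q x) * (⨆ x, r x) ≤ 0
  · have hρ : 0 ≤ 1 - ⨅ x, r x := by linarith [ciInf_le hr' x]
    exact (div_nonpos_of_nonpos_of_nonneg hN hρ).trans (hs₀ x)
  have key : (⨅ x, p x) - (⨆ x, q x) * (⨆ x, r x) ≤ s x * (1 - r x) := by
    have hqr : q x * r x ≤ (⨆ x, q x) * (⨆ x, r x) :=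
      mul_le_mul (le_ciSup hq x) (le_ciSup hr x) (hr₀ x) ((hq₀ x).trans (le_ciSup hq x))
    linarith [h x, ciInf_le hp x]
  calc ((⨅ x, p x) - (⨆ x, q x) * (⨆ x, r x)) / (1 - ⨅ x, r x)
      ≤ ((⨅ x, p x) - (⨆ x, q x) * (⨆ x, r x)) / (1 - r x) :=
        div_le_div_of_nonneg_left (not_le.1 hN).le hrx (by linarith [ciInf_le hr' x])
    _ ≤ s x := (div_le_iff₀ hrx).2 key

section condP

variable {Ω : Type*} [MeasurableSpace Ω] {μ : Measure Ω}

theorem condP_eq_measureReal_div (E F : Set Ω) : condP μ E F = μ.real (E ∩ F) / μ.real F := rfl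

theorem condP_nonneg (E F : Set Ω) : 0 ≤ condP μ E F :=
  div_nonneg measureReal_nonneg measureReal_nonneg

theorem bddBelow_range_condP {ι : Type*} (E F : ι → Set Ω) :
    BddBelow (Set.range fun x => condP μ (E x) (F x)) :=
  ⟨0, Set.forall_mem_range.2 fun x => condP_nonneg (E x) (F x)⟩

variable [IsFiniteMeasure μ]

theorem condP_le_one (E F : Set Ω) : condP μ E F ≤ 1 :=
  div_le_one_of_le₀ (measureReal_mono Set.inter_subset_right) measureReal_nonneg

theorem bddAbove_range_condP {ι : Type*} (E F : ι → Set Ω) :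
    BddAbove (Set.range fun x => condP μ (E x) (F x)) :=
  ⟨1, Set.forall_mem_range.2 fun x => condP_le_one (E x) (F x)⟩

theorem condP_lt_one {B C : Set Ω} (hC : MeasurableSet C) (hBC : 0 < μ.real (B ∩ Cᶜ)) :
    condP μ C B < 1 := by
  rw [condP_eq_measureReal_div, Set.inter_comm, ← measureReal_inter_add_sdiff (s := B) hC]
  have hB : 0 < μ.real (B ∩ C) + μ.real (B \ C) := by positivity
  exact (div_lt_one hB).2 (lt_add_of_pos_right _ hBC)

theorem condP_eq_mul_add_mul (A B : Set Ω) {C : Set Ω} (hC : MeasurableSet C) :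
    condP μ A B = condP μ A (B ∩ C) * condP μ C B
      + condP μ A (B ∩ Cᶜ) * (1 - condP μ C B) := by
  have hsplit (S : Set Ω) : μ.real S = μ.real (S ∩ C) + μ.real (S ∩ Cᶜ) :=
    (measureReal_inter_add_sdiff hC).symm
  have hnull (S : Set Ω) (hS : μ.real S = 0) : μ.real (A ∩ S) = 0 :=
    measureReal_mono_null Set.inter_subset_right hS
  simp only [condP_eq_measureReal_div, Set.inter_comm C B]
  rw [hsplit B, hsplit (A ∩ B)]
  simp only [Set.inter_assoc]
  exact add_div_add_eq_div_mul_add_div_mul measureReal_nonneg measureReal_nonneg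
    (hnull _) (hnull _)

end condP

theorem iInf_condProb_inter_compl_ge_general
    {Ω : Type*} [MeasurableSpace Ω] (μ : Measure Ω) [IsProbabilityMeasure μ]
    {ι : Type*} [Nonempty ι]
    (A B C : ι → Set Ω)
    (hC : ∀ x, MeasurableSet (C x))
    (hBCc : ∀ x, 0 < (μ (B x ∩ (C x)ᶜ)).toReal) :
    (⨅ x, condP μ (A x) (B x ∩ (C x)ᶜ))
      ≥ ((⨅ x, condP μ (A x) (B x))
          - (⨆ x, condP μ (A x) (B x ∩ C x)) * (⨆ x, condP μ (C x) (B x)))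
        / (1 - ⨅ x, condP μ (C x) (B x)) :=
  le_iInf_of_eq_mul_add_mul (fun x => condP_eq_mul_add_mul (A x) (B x) (hC x))
    (bddBelow_range_condP A B) (bddAbove_range_condP A fun x => B x ∩ C x)
    (bddAbove_range_condP C B) (fun _ => condP_nonneg _ _) (fun _ => condP_nonneg _ _)
    (fun x => condP_lt_one (hC x) (hBCc x)) (fun _ => condP_nonneg _ _)

theorem iInf_condProb_inter_compl_ge
    {Ω : Type*} [MeasurableSpace Ω] (μ : Measure Ω) [IsProbabilityMeasure μ]
    {ι : Type*} [Nonempty ι]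
    (A B C : ι → Set Ω)
    (hA : ∀ x, MeasurableSet (A x)) (hB : ∀ x, MeasurableSet (B x))
    (hC : ∀ x, MeasurableSet (C x))
    (hBC : ∀ x, 0 < (μ (B x ∩ C x)).toReal)
    (hBCc : ∀ x, 0 < (μ (B x ∩ (C x)ᶜ)).toReal) :
    (⨅ x, condP μ (A x) (B x ∩ (C x)ᶜ))
      ≥ ((⨅ x, condP μ (A x) (B x))
          - (⨆ x, condP μ (A x) (B x ∩ C x)) * (⨆ x, condP μ (C x) (B x)))
        / (1 - ⨅ x, condP μ (C x) (B x)) :=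
  iInf_condProb_inter_compl_ge_general μ A B C hC hBCc
end
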